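/- Let γ ≥ 2, 1 < p < 2, and a, b, c, d ∈ ℝ. Then (J_γ(a-b) - J_γ(c-d))·(J_p(a-c) - J_p(b-d)) ≥ 4·((γ-1)(p-1)/γ²)·| |a-b|^{(γ-2)/2}(a-b) - |c-d|^{(γ-2)/2}(c-d) |² · (|a-c| + |b-d|)^{p-2}, where the right-hand side is interpreted as 0 when a-c = b-d = 0. -/

import Mathlib

/-!
Put `u = a - b`, `v = c - d`, `x = a - c`, `y = b - d`, so that `x - y = u - v`. Both factors are
controlled through `J r u - J r v = (r - 1) ∫_v^u |t|^(r-2) dt`: for the `γ`-factor, Cauchy–Schwarz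
applied to `∫_v^u |t|^((γ-2)/2)` gives `(J γ u - J γ v)(u - v) ≥ 4(γ-1)/γ² (F u - F v)²` with
`F t = |t|^((γ-2)/2) t`; for the `p`-factor, `|t|^(p-2) ≥ (|x| + |y|)^(p-2)` on `[y, x]` since
`p ≤ 2`. Multiplying the two bounds and cancelling `(u - v)²` gives the claim.
-/

noncomputable def J (r t : ℝ) : ℝ := |t| ^ (r - 2) * t

open MeasureTheory Set Real

lemma abs_J {r : ℝ} (hr : r ≠ 1) (t : ℝ) : |J r t| = |t| ^ (r - 1) := by
  rcases eq_or_ne t 0 with rfl | ht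
  · simp [J, zero_rpow (sub_ne_zero.2 hr)]
  · rw [J, abs_mul, abs_of_nonneg (rpow_nonneg (abs_nonneg t) _),
      ← rpow_add_one (abs_ne_zero.2 ht)]
    ring_nf

lemma continuous_J {r : ℝ} (hr : 1 < r) : Continuous (J r) := by
  refine continuous_iff_continuousAt.2 fun t => ?_
  rcases eq_or_ne t 0 with rfl | ht
  · have h : Filter.Tendsto (fun s : ℝ => |s| ^ (r - 1)) (nhds 0) (nhds 0) := by
      simpa [zero_rpow (sub_pos.2 hr).ne'] using
        (continuous_abs.rpow_const fun _ => Or.inr (sub_pos.2 hr).le).tendsto (0 : ℝ)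
    simpa [ContinuousAt, J] using squeeze_zero_norm (fun s => (abs_J hr.ne' s).le) h
  · exact (continuousAt_id.abs.rpow_const (Or.inl (abs_ne_zero.2 ht))).mul continuousAt_id

lemma hasDerivAt_J (r : ℝ) {t : ℝ} (ht : t ≠ 0) :
    HasDerivAt (J r) ((r - 1) * |t| ^ (r - 2)) t := by
  refine (((hasDerivAt_abs ht).rpow_const (p := r - 2) (Or.inl (abs_ne_zero.2 ht))).mul
    (hasDerivAt_id' t)).congr_deriv ?_
  have h : |t| ^ (r - 2 - 1) * (SignType.sign t * t) = |t| ^ (r - 2) := by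
    rw [sign_mul_self, ← rpow_add_one (abs_ne_zero.2 ht)]
    ring_nf
  linear_combination (r - 2) * h

lemma intervalIntegrable_abs_rpow {c : ℝ} (hc : -1 < c) (a b : ℝ) :
    IntervalIntegrable (fun t : ℝ => |t| ^ c) volume a b := by
  have h_nonneg (u : ℝ) (hu : 0 ≤ u) : IntervalIntegrable (fun t : ℝ => |t| ^ c) volume 0 u := by
    have h := intervalIntegral.intervalIntegrable_rpow' (a := 0) (b := u) hc
    rw [intervalIntegrable_iff, uIoc_of_le hu] at h ⊢
    exact h.congr_fun (fun t ht => by simp [abs_of_pos ht.1]) measurableSet_Ioc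
  have h_zero (u : ℝ) : IntervalIntegrable (fun t : ℝ => |t| ^ c) volume 0 u := by
    rcases le_total 0 u with hu | hu
    · exact h_nonneg u hu
    · have h := h_nonneg (-u) (neg_nonneg.2 hu)
      rw [IntervalIntegrable.iff_comp_neg] at h
      simpa using h
  exact (h_zero a).symm.trans (h_zero b)

lemma J_sub_J_eq_mul_integral {r : ℝ} (hr : 1 < r) (u v : ℝ) :
    J r u - J r v = (r - 1) * ∫ t in v..u, |t| ^ (r - 2) := by
  rw [← intervalIntegral.integral_const_mul]
  refine (integral_eq_of_hasDerivAt_off_countable (J r) _ (s := {0}) (countable_singleton 0)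
    (continuous_J hr).continuousOn (fun t ht => hasDerivAt_J r (by simpa using ht.2))
    ((intervalIntegrable_abs_rpow (by linarith) v u).const_mul _)).symm

lemma sq_integral_le_mul_integral_sq {v u : ℝ} (h : v ≤ u) {g : ℝ → ℝ}
    (hg : IntervalIntegrable g volume v u) (hg2 : IntervalIntegrable (fun t => g t ^ 2) volume v u) :
    (∫ t in v..u, g t) ^ 2 ≤ (u - v) * ∫ t in v..u, g t ^ 2 := by
  rcases h.eq_or_lt with rfl | hlt
  · simp
  set A := ∫ t in v..u, g t
  set B := ∫ t in v..u, g t ^ 2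
  set m := A / (u - v)
  have hm : m * (u - v) = A := div_mul_cancel₀ A (sub_pos.2 hlt).ne'
  -- expand `0 ≤ ∫ (g - m)²`, where `m` is the mean of `g` on `[v, u]`
  have hvar : ∫ t in v..u, (g t - m) ^ 2 = B - 2 * m * A + m ^ 2 * (u - v) := by
    have hsplit : (fun t => (g t - m) ^ 2) = fun t => (g t ^ 2 - 2 * m * g t) + m ^ 2 := by
      funext t; ring
    rw [hsplit, intervalIntegral.integral_add (hg2.sub (hg.const_mul _)) intervalIntegrable_const,
      intervalIntegral.integral_sub hg2 (hg.const_mul _), intervalIntegral.integral_const_mul,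
      intervalIntegral.integral_const, smul_eq_mul]
    ring
  have h0 : 0 ≤ ∫ t in v..u, (g t - m) ^ 2 :=
    intervalIntegral.integral_nonneg h fun _ _ => sq_nonneg _
  nlinarith [mul_nonneg (sub_pos.2 hlt).le h0]

lemma mul_sq_J_sub_J_le {γ : ℝ} (hγ : 1 < γ) (u v : ℝ) :
    4 * (γ - 1) / γ ^ 2 * (J (γ / 2 + 1) u - J (γ / 2 + 1) v) ^ 2 ≤
      (J γ u - J γ v) * (u - v) := by
  wlog h : v ≤ u generalizing u v
  · have := this v u (le_of_not_ge h)
    linarith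
  set A := ∫ t in v..u, |t| ^ (γ / 2 - 1)
  set B := ∫ t in v..u, |t| ^ (γ - 2)
  have hsq : (fun t : ℝ => (|t| ^ (γ / 2 - 1)) ^ 2) = fun t => |t| ^ (γ - 2) := by
    funext t
    rw [← rpow_mul_natCast (abs_nonneg t)]
    ring_nf
  have hA : J (γ / 2 + 1) u - J (γ / 2 + 1) v = γ / 2 * A := by
    rw [J_sub_J_eq_mul_integral (by linarith), show γ / 2 + 1 - 1 = γ / 2 by ring,
      show γ / 2 + 1 - 2 = γ / 2 - 1 by ring]
  have hB : J γ u - J γ v = (γ - 1) * B := J_sub_J_eq_mul_integral hγ u v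
  have hCS : A ^ 2 ≤ (u - v) * B := by
    have := sq_integral_le_mul_integral_sq h (intervalIntegrable_abs_rpow (by linarith) v u)
      (hsq ▸ intervalIntegrable_abs_rpow (by linarith) v u)
    rwa [hsq] at this
  have hγ0 : γ ≠ 0 := by positivity
  rw [hA, hB]
  calc 4 * (γ - 1) / γ ^ 2 * (γ / 2 * A) ^ 2 = (γ - 1) * A ^ 2 := by field_simp; ring
    _ ≤ (γ - 1) * ((u - v) * B) := mul_le_mul_of_nonneg_left hCS (by linarith)
    _ = _ := by ring

lemma mul_sub_mul_rpow_le_J_sub_J {p : ℝ} (hp1 : 1 < p) (hp2 : p ≤ 2) {x y : ℝ} (h : y ≤ x) :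
    (p - 1) * (x - y) * (|x| + |y|) ^ (p - 2) ≤ J p x - J p y := by
  rw [J_sub_J_eq_mul_integral hp1, mul_assoc]
  refine mul_le_mul_of_nonneg_left ?_ (by linarith)
  rw [← smul_eq_mul, ← intervalIntegral.integral_const]
  refine intervalIntegral.integral_mono_ae_restrict h intervalIntegrable_const
    (intervalIntegrable_abs_rpow (c := p - 2) (by linarith) y x) ?_
  filter_upwards [ae_restrict_of_ae (Measure.ae_ne volume 0),
    ae_restrict_mem measurableSet_Icc] with t ht0 ht
  have hbound : |t| ≤ |x| + |y| := abs_le.2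
    ⟨by linarith [ht.1, neg_abs_le y, abs_nonneg x],
      by linarith [ht.2, le_abs_self x, abs_nonneg y]⟩
  exact rpow_le_rpow_of_nonpos (abs_pos.2 ht0) hbound (by linarith)

lemma mul_sq_mul_rpow_le_J_sub_J {p : ℝ} (hp1 : 1 < p) (hp2 : p ≤ 2) (x y : ℝ) :
    (p - 1) * (x - y) ^ 2 * (|x| + |y|) ^ (p - 2) ≤ (J p x - J p y) * (x - y) := by
  wlog h : y ≤ x generalizing x y
  · have := this y x (le_of_not_ge h)
    rw [add_comm] at this
    linarith
  have := mul_le_mul_of_nonneg_right (mul_sub_mul_rpow_le_J_sub_J hp1 hp2 h) (sub_nonneg.2 h)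
  linarith

theorem stmt_3 (γ p : ℝ) (hγ : 2 ≤ γ) (hp1 : 1 < p) (hp2 : p < 2)
    (a b c d : ℝ) :
    (J γ (a - b) - J γ (c - d)) * (J p (a - c) - J p (b - d)) ≥
      4 * ((γ - 1) * (p - 1) / γ ^ 2) *
        |(|a - b| ^ ((γ - 2) / 2) * (a - b) - |c - d| ^ ((γ - 2) / 2) * (c - d))| ^ 2 *
        (|a - c| + |b - d|) ^ (p - 2) := by
  have hF (t : ℝ) : |t| ^ ((γ - 2) / 2) * t = J (γ / 2 + 1) t := by
    rw [J]; ring_nf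
  have hδ : a - c - (b - d) = a - b - (c - d) := by ring
  have H1 := mul_sq_J_sub_J_le (γ := γ) (by linarith) (a - b) (c - d)
  have H2 := mul_sq_mul_rpow_le_J_sub_J hp1 hp2.le (a - c) (b - d)
  rw [hδ] at H2
  rw [hF, hF, sq_abs, ge_iff_le]
  set δ := a - b - (c - d)
  set M := (|a - c| + |b - d|) ^ (p - 2)
  rcases eq_or_ne δ 0 with hδ0 | hδ0
  · have : a - b = c - d := sub_eq_zero.1 hδ0
    simp [this]
  have hM : 0 ≤ M := rpow_nonneg (by positivity) _
  have hK : 0 ≤ 4 * (γ - 1) / γ ^ 2 := div_nonneg (by linarith) (sq_nonneg γ)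
  have hp : 0 < p - 1 := sub_pos.2 hp1
  have hprod := mul_le_mul H1 H2 (by positivity) ((mul_nonneg hK (sq_nonneg _)).trans H1)
  refine le_of_mul_le_mul_right ?_ (by positivity : 0 < δ ^ 2)
  linear_combination hprod
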